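/- arXiv:1906.00444 — 2 statements merged into one kernel-verified Lean document; each statement's English description precedes it below -/
import Mathlib

section
/- Let V : [r₀, ∞) → ℝ be a nonnegative, differentiable, nondecreasing function and let χ : [r₀, ∞) → ℝ be differentiable and nondecreasing with 0 ≤ χ(r) ≤ δ V(r) for all r, where 0 ≤ δ < n/2. Suppose for all r ≥ r₀ > 0 and some constant c ≥ 0: n V(r) − 2χ(r) = ((r² + 4c)/r) V'(r) − (4/r) χ'(r). Then for all r ≥ r₀, V(r) ≥ (V(r₀)/(r₀² + 4c)^{n/2−δ}) (r² + 4c)^{n/2−δ}. -/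
/-!
Monotonicity of `χ` gives `χ' ≥ 0`; together with `χ ≤ δ V` the identity yields the differential
inequality `(r² + 4c) V' ≥ 2α r V` with `α = n/2 - δ`. This says exactly that
`V (r² + 4c)^(-α)` has nonnegative derivative, so it is nondecreasing on `[r₀, ∞)`, and comparing
its values at `r₀` and `r` is the claim.
-/

open Set

theorem HasDerivAt.nonneg_of_monotoneOn_Ici {g : ℝ → ℝ} {g' a x : ℝ} (hd : HasDerivAt g g' x)
    (hg : MonotoneOn g (Ici a)) (hx : x ∈ Ici a) : 0 ≤ g' := by
  have hacc : AccPt x (Filter.principal (Ioi x)) := by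
    rw [accPt_principal_iff_nhdsWithin, sdiff_singleton_eq_self self_notMem_Ioi]
    infer_instance
  exact hd.hasDerivWithinAt.nonneg_of_monotoneOn hacc
    (hg.mono fun _ hy => mem_Ici.2 (hx.trans hy.le))

theorem monotoneOn_mul_rpow_neg {s : Set ℝ} (hs : Convex ℝ s) {f f' u u' : ℝ → ℝ} (α : ℝ)
    (hf : ∀ x ∈ s, HasDerivAt f (f' x) x) (hu : ∀ x ∈ s, HasDerivAt u (u' x) x)
    (hu_pos : ∀ x ∈ s, 0 < u x) (h : ∀ x ∈ s, α * u' x * f x ≤ u x * f' x) :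
    MonotoneOn (fun x => f x * u x ^ (-α)) s := by
  have hderiv : ∀ x ∈ s, HasDerivAt (fun x => f x * u x ^ (-α))
      (u x ^ (-α - 1) * (u x * f' x - α * u' x * f x)) x := by
    intro x hx
    have hux := hu_pos x hx
    refine ((hf x hx).mul ((hu x hx).rpow_const (p := -α) (Or.inl hux.ne'))).congr_deriv ?_
    rw [show u x ^ (-α) = u x ^ (-α - 1) * u x by
      rw [← Real.rpow_add_one hux.ne']; ring_nf]
    ring
  refine monotoneOn_of_hasDerivWithinAt_nonneg hs
    (fun x hx => (hderiv x hx).continuousAt.continuousWithinAt)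
    (fun x hx => (hderiv x (interior_subset hx)).hasDerivWithinAt) fun x hx => ?_
  have hx := interior_subset hx
  exact mul_nonneg (Real.rpow_nonneg (hu_pos x hx).le _) (sub_nonneg.2 (h x hx))

theorem le_of_monotoneOn_mul_rpow_neg {s : Set ℝ} {f u : ℝ → ℝ} {α x y : ℝ}
    (hmono : MonotoneOn (fun x => f x * u x ^ (-α)) s) (hu_pos : ∀ x ∈ s, 0 < u x)
    (hx : x ∈ s) (hy : y ∈ s) (hxy : x ≤ y) :
    f x / u x ^ α * u y ^ α ≤ f y := by
  have h := hmono hx hy hxy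
  simp only [Real.rpow_neg (hu_pos x hx).le, Real.rpow_neg (hu_pos y hy).le, ← div_eq_mul_inv] at h
  have huy := Real.rpow_pos_of_pos (hu_pos y hy) α
  calc f x / u x ^ α * u y ^ α ≤ f y / u y ^ α * u y ^ α := by gcongr
    _ = f y := div_mul_cancel₀ _ huy.ne'

theorem volume_lower_bound_general (n δ c r₀ : ℝ) (V χ V' χ' : ℝ → ℝ)
    (hr₀ : 0 < r₀) (hc : 0 ≤ c)
    (hVderiv : ∀ r ∈ Ici r₀, HasDerivAt V (V' r) r)
    (hχderiv : ∀ r ∈ Ici r₀, HasDerivAt χ (χ' r) r)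
    (hχmono : MonotoneOn χ (Ici r₀))
    (hχbound : ∀ r ∈ Ici r₀, 0 ≤ χ r ∧ χ r ≤ δ * V r)
    (hid : ∀ r ∈ Ici r₀,
      n * V r - 2 * χ r = ((r ^ 2 + 4 * c) / r) * V' r - (4 / r) * χ' r) :
    ∀ r ∈ Ici r₀,
      V r ≥ (V r₀ / (r₀ ^ 2 + 4 * c) ^ (n / 2 - δ))
        * (r ^ 2 + 4 * c) ^ (n / 2 - δ) := by
  have hpos : ∀ r ∈ Ici r₀, 0 < r ^ 2 + 4 * c := fun r hr => by
    have : 0 < r := hr₀.trans_le hr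
    positivity
  have hderiv : ∀ r ∈ Ici r₀, HasDerivAt (fun r : ℝ => r ^ 2 + 4 * c) (2 * r) r := fun r _ => by
    simpa using (hasDerivAt_pow 2 r).add_const (4 * c)
  have hineq : ∀ r ∈ Ici r₀, (n / 2 - δ) * (2 * r) * V r ≤ (r ^ 2 + 4 * c) * V' r := by
    intro r hr
    have hr_pos : 0 < r := hr₀.trans_le hr
    have hχ' : 0 ≤ χ' r := (hχderiv r hr).nonneg_of_monotoneOn_Ici hχmono hr
    have hmul : (r ^ 2 + 4 * c) * V' r = r * (n * V r - 2 * χ r) + 4 * χ' r := by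
      rw [hid r hr]; field_simp; ring
    nlinarith [(hχbound r hr).2]
  have hmono := monotoneOn_mul_rpow_neg (convex_Ici r₀) (n / 2 - δ) hVderiv hderiv hpos hineq
  exact fun r hr => le_of_monotoneOn_mul_rpow_neg hmono hpos self_mem_Ici hr hr

/-- Analytic core of Lemma 1.3: if `V, χ` are differentiable on `[r₀, ∞)`,
`V ≥ 0` nondecreasing, `χ` nondecreasing with `0 ≤ χ ≤ δ V` where
`0 ≤ δ < n/2`, `c ≥ 0`, `r₀ > 0`, and the identity
`n V(r) − 2χ(r) = ((r²+4c)/r) V'(r) − (4/r) χ'(r)` holds for `r ≥ r₀`, then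
`V(r) ≥ (V(r₀)/(r₀²+4c)^{n/2−δ}) (r²+4c)^{n/2−δ}` for all `r ≥ r₀`. -/
theorem volume_lower_bound (n δ c r₀ : ℝ) (V χ V' χ' : ℝ → ℝ)
    (hr₀ : 0 < r₀) (hc : 0 ≤ c) (hδ0 : 0 ≤ δ) (hδ : δ < n / 2)
    (hVderiv : ∀ r ∈ Ici r₀, HasDerivAt V (V' r) r)
    (hχderiv : ∀ r ∈ Ici r₀, HasDerivAt χ (χ' r) r)
    (hVnonneg : ∀ r ∈ Ici r₀, 0 ≤ V r)
    (hVmono : MonotoneOn V (Ici r₀))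
    (hχmono : MonotoneOn χ (Ici r₀))
    (hχbound : ∀ r ∈ Ici r₀, 0 ≤ χ r ∧ χ r ≤ δ * V r)
    (hid : ∀ r ∈ Ici r₀,
      n * V r - 2 * χ r = ((r ^ 2 + 4 * c) / r) * V' r - (4 / r) * χ' r) :
    ∀ r ∈ Ici r₀,
      V r ≥ (V r₀ / (r₀ ^ 2 + 4 * c) ^ (n / 2 - δ))
        * (r ^ 2 + 4 * c) ^ (n / 2 - δ) :=
  volume_lower_bound_general n δ c r₀ V χ V' χ' hr₀ hc hVderiv hχderiv hχmono hχbound hid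
end

section
/- Under the same hypotheses as the previous statement (the differential identity n V(r) − 2χ(r) = ((r²+4c)/r) V'(r) − (4/r) χ'(r), with 0 ≤ χ ≤ δV, χ' ≥ 0, 0 ≤ δ < n/2), one has for all r ≥ r₀: V'(r) ≥ (n − 2δ) (V(r₀)/(r₀² + 4c)^{n/2−δ}) · r · (r² + 4c)^{n/2−1−δ}. -/
open Set

/-- Derivative lower bound (1.3) in Lemma 1.3: under the same hypotheses as the
volume lower bound, for all `r ≥ r₀`,
`V'(r) ≥ (n−2δ) (V(r₀)/(r₀²+4c)^{n/2−δ}) r (r²+4c)^{n/2−1−δ}`. -/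
theorem area_lower_bound (n δ c r₀ : ℝ) (V χ V' χ' : ℝ → ℝ)
    (hr₀ : 0 < r₀) (hc : 0 ≤ c) (hδ0 : 0 ≤ δ) (hδ : δ < n / 2)
    (hVderiv : ∀ r ∈ Ici r₀, HasDerivAt V (V' r) r)
    (hχderiv : ∀ r ∈ Ici r₀, HasDerivAt χ (χ' r) r)
    (hVnonneg : ∀ r ∈ Ici r₀, 0 ≤ V r)
    (hVmono : MonotoneOn V (Ici r₀))
    (hχmono : MonotoneOn χ (Ici r₀))
    (hχbound : ∀ r ∈ Ici r₀, 0 ≤ χ r ∧ χ r ≤ δ * V r)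
    (hid : ∀ r ∈ Ici r₀,
      n * V r - 2 * χ r = ((r ^ 2 + 4 * c) / r) * V' r - (4 / r) * χ' r) :
    ∀ r ∈ Ici r₀,
      V' r ≥ (n - 2 * δ) * (V r₀ / (r₀ ^ 2 + 4 * c) ^ (n / 2 - δ))
        * r * (r ^ 2 + 4 * c) ^ (n / 2 - 1 - δ) := by
  set α : ℝ := n / 2 - δ with hα
  have hαpos : 0 < α := by simp only [hα]; linarith
  have hPpos : ∀ s : ℝ, s ∈ Ici r₀ → 0 < s ^ 2 + 4 * c := by
    intro s hs
    have : 0 < s := lt_of_lt_of_le hr₀ hs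
    nlinarith
  -- χ' is nonnegative on Ici r₀
  have hχ'nonneg : ∀ s ∈ Ici r₀, 0 ≤ χ' s := by
    intro s hs
    have hd := hχderiv s hs
    have htend : Filter.Tendsto (slope χ s) (nhdsWithin s (Ioi s)) (nhds (χ' s)) :=
      (hasDerivAt_iff_tendsto_slope.mp hd).mono_left
        (nhdsWithin_mono _ (fun t ht => ht.ne'))
    refine ge_of_tendsto htend ?_
    refine eventually_nhdsWithin_of_forall ?_
    intro t ht
    have hts : s < t := ht
    have ht' : t ∈ Ici r₀ := le_trans hs hts.le
    have hmono := hχmono hs ht' hts.le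
    rw [slope_def_field]
    exact div_nonneg (by linarith) (by linarith)
  -- derivative lower bound in terms of V
  have hV' : ∀ s ∈ Ici r₀, (n - 2 * δ) * s / (s ^ 2 + 4 * c) * V s ≤ V' s := by
    intro s hs
    have hspos : 0 < s := lt_of_lt_of_le hr₀ hs
    have hP := hPpos s hs
    have hid' := hid s hs
    have hχb := (hχbound s hs).2
    have hχ' := hχ'nonneg s hs
    have hVpos := hVnonneg s hs
    rw [div_mul_eq_mul_div, div_le_iff₀ hP]
    have hid2 : s * (n * V s - 2 * χ s) = (s ^ 2 + 4 * c) * V' s - 4 * χ' s := by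
      field_simp at hid'
      linarith [hid']
    nlinarith [mul_le_mul_of_nonneg_left hχb hspos.le]
  -- derivative of the comparison function g
  have hgderiv : ∀ s ∈ Ici r₀,
      HasDerivAt (fun t => V t * (t ^ 2 + 4 * c) ^ (-α))
        (V' s * (s ^ 2 + 4 * c) ^ (-α)
          + V s * (-α * (s ^ 2 + 4 * c) ^ (-α - 1) * (2 * s))) s := by
    intro s hs
    have hP := hPpos s hs
    have h1 : HasDerivAt (fun t : ℝ => t ^ 2 + 4 * c) (2 * s) s := by
      simpa using (hasDerivAt_pow 2 s).add_const (4 * c)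
    have h2 : HasDerivAt (fun y : ℝ => y ^ (-α))
        (-α * (s ^ 2 + 4 * c) ^ (-α - 1)) (s ^ 2 + 4 * c) :=
      Real.hasDerivAt_rpow_const (Or.inl hP.ne')
    have h3 : HasDerivAt ((fun y : ℝ => y ^ (-α)) ∘ (fun t : ℝ => t ^ 2 + 4 * c))
        (-α * (s ^ 2 + 4 * c) ^ (-α - 1) * (2 * s)) s :=
      HasDerivAt.comp (h := fun t : ℝ => t ^ 2 + 4 * c) s h2 h1
    exact (hVderiv s hs).mul h3
  -- g' is nonnegative
  have hg'nonneg : ∀ s ∈ Ici r₀,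
      0 ≤ V' s * (s ^ 2 + 4 * c) ^ (-α)
          + V s * (-α * (s ^ 2 + 4 * c) ^ (-α - 1) * (2 * s)) := by
    intro s hs
    have hP := hPpos s hs
    have hQ : (0:ℝ) < (s ^ 2 + 4 * c) ^ (-α) := Real.rpow_pos_of_pos hP _
    have h1 := hV' s hs
    have hkey : (s ^ 2 + 4 * c) ^ (-α - 1)
        = (s ^ 2 + 4 * c) ^ (-α) / (s ^ 2 + 4 * c) := by
      rw [Real.rpow_sub hP, Real.rpow_one]
    rw [hkey]
    have h2 := mul_le_mul_of_nonneg_right h1 hQ.le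
    have heq : V s * (-α * ((s ^ 2 + 4 * c) ^ (-α) / (s ^ 2 + 4 * c)) * (2 * s))
        = -((n - 2 * δ) * s / (s ^ 2 + 4 * c) * V s * (s ^ 2 + 4 * c) ^ (-α)) := by
      rw [hα]; ring
    rw [heq]
    linarith
  -- g is monotone on Ici r₀
  have hgmono : MonotoneOn (fun t => V t * (t ^ 2 + 4 * c) ^ (-α)) (Ici r₀) := by
    apply monotoneOn_of_deriv_nonneg (convex_Ici r₀)
    · exact fun s hs => (hgderiv s hs).continuousAt.continuousWithinAt
    · intro s hs
      rw [interior_Ici] at hs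
      exact (hgderiv s (mem_Ici.mpr (mem_Ioi.mp hs).le)).differentiableAt.differentiableWithinAt
    · intro s hs
      rw [interior_Ici] at hs
      rw [(hgderiv s (mem_Ici.mpr (mem_Ioi.mp hs).le)).deriv]
      exact hg'nonneg s (mem_Ici.mpr (mem_Ioi.mp hs).le)
  -- main conclusion
  intro r hr
  have hrpos : 0 < r := lt_of_lt_of_le hr₀ hr
  have hP := hPpos r hr
  have hP₀ := hPpos r₀ (self_mem_Ici)
  have hPA : (0:ℝ) < (r ^ 2 + 4 * c) ^ α := Real.rpow_pos_of_pos hP _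
  have hP₀A : (0:ℝ) < (r₀ ^ 2 + 4 * c) ^ α := Real.rpow_pos_of_pos hP₀ _
  have hg := hgmono self_mem_Ici hr hr
  -- V r ≥ V r₀ * (r₀²+4c)^(-α) * (r²+4c)^α
  have h2 : V r₀ * (r₀ ^ 2 + 4 * c) ^ (-α) * (r ^ 2 + 4 * c) ^ α ≤ V r := by
    have := mul_le_mul_of_nonneg_right hg hPA.le
    have hcanc : V r * (r ^ 2 + 4 * c) ^ (-α) * (r ^ 2 + 4 * c) ^ α = V r := by
      rw [Real.rpow_neg hP.le]
      field_simp
    simpa [hcanc] using this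
  have h1 := hV' r hr
  have hexp1 : n / 2 - δ = α := by rw [hα]
  have hexp2 : n / 2 - 1 - δ = α - 1 := by rw [hα]; ring
  rw [ge_iff_le, hexp2, Real.rpow_sub hP, Real.rpow_one]
  have hcoef : (0:ℝ) ≤ (n - 2 * δ) * r / (r ^ 2 + 4 * c) := by
    apply div_nonneg _ hP.le
    have : 0 < n - 2 * δ := by linarith
    positivity
  have h3 := mul_le_mul_of_nonneg_left h2 hcoef
  have heq : (n - 2 * δ) * (V r₀ / (r₀ ^ 2 + 4 * c) ^ α) * r * ((r ^ 2 + 4 * c) ^ α / (r ^ 2 + 4 * c))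
      = (n - 2 * δ) * r / (r ^ 2 + 4 * c) * (V r₀ * (r₀ ^ 2 + 4 * c) ^ (-α) * (r ^ 2 + 4 * c) ^ α) := by
    rw [Real.rpow_neg hP₀.le]
    ring
  rw [heq]
  linarith
end
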